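/- arXiv:2303.02266 — 2 statements merged into one kernel-verified Lean document; each statement's English description precedes it below -/
import Mathlib

section
/- Let E be a real inner product space, N ≥ 1, D_1,…,D_N positive integers with D = Σ_i D_i, and vectors g_{im} ∈ E for i = 1,…,N, m = 1,…,D_i, each satisfying ‖g_{im}‖ ≤ G. Let C_1,…,C_N ∈ {0,1} and S = Σ_{i=1}^N D_i C_i, and suppose S > 0. Then ‖(1/D)·Σ_{i=1}^N Σ_{m=1}^{D_i} g_{im} − (1/S)·Σ_{i=1}^N C_i Σ_{m=1}^{D_i} g_{im}‖ ≤ (2/D)·(D − S)·G. -/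
open Finset

/-- Deterministic aggregation-error bound: if each gradient `g i m` has norm at most `G`,
`C i ∈ {0,1}` are reception indicators, `D = Σ_i D_i` and `S = Σ_i D_i C_i > 0`, then the
difference between the full-data average and the average over correctly received devices
has norm at most `(2/D)(D - S)G`. -/
theorem stmt_4 {E : Type*} [NormedAddCommGroup E] [InnerProductSpace ℝ E]
    (N : ℕ) (hN : 1 ≤ N) (Dn : Fin N → ℕ) (hDn : ∀ i, 0 < Dn i)
    (g : (i : Fin N) → Fin (Dn i) → E) (G : ℝ)
    (hG : ∀ (i : Fin N) (m : Fin (Dn i)), ‖g i m‖ ≤ G)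
    (C : Fin N → ℝ) (hC : ∀ i, C i = 0 ∨ C i = 1)
    (D S : ℝ) (hD : D = ∑ i, (Dn i : ℝ)) (hS : S = ∑ i, (Dn i : ℝ) * C i)
    (hSpos : 0 < S) :
    ‖(1 / D) • (∑ i, ∑ m, g i m) - (1 / S) • (∑ i, C i • ∑ m, g i m)‖ ≤
      (2 / D) * (D - S) * G := by
  have hi0 : (0 : ℕ) < N := hN
  have hGnn : 0 ≤ G := le_trans (norm_nonneg _) (hG ⟨0, hi0⟩ ⟨0, hDn _⟩)
  have hC01 : ∀ i, 0 ≤ C i ∧ C i ≤ 1 := by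
    intro i; rcases hC i with h | h <;> simp [h]
  have hDpos : 0 < D := by
    rw [hD]
    exact Finset.sum_pos (fun i _ => by exact_mod_cast hDn i)
      (Finset.univ_nonempty_iff.mpr ⟨⟨0, hi0⟩⟩)
  have hSleD : S ≤ D := by
    rw [hS, hD]
    apply Finset.sum_le_sum
    intro i _
    nlinarith [(hC01 i).1, (hC01 i).2, Nat.cast_nonneg (Dn i) (α := ℝ)]
  have hnormsum : ∀ i : Fin N, ‖∑ m, g i m‖ ≤ (Dn i : ℝ) * G := by
    intro i
    calc ‖∑ m, g i m‖ ≤ ∑ m : Fin (Dn i), G := norm_sum_le_of_le _ (fun m _ => hG i m)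
      _ = (Dn i : ℝ) * G := by simp [mul_comm]
  set T := ∑ i, ∑ m, g i m with hT
  set U := ∑ i, C i • ∑ m, g i m with hU
  have key : (1/D) • T - (1/S) • U = (1/D) • (T - U) + ((1/D) - (1/S)) • U := by
    rw [smul_sub, sub_smul]; abel
  have hTU : ‖T - U‖ ≤ (D - S) * G := by
    have h1 : T - U = ∑ i, (1 - C i) • ∑ m, g i m := by
      rw [hT, hU, ← Finset.sum_sub_distrib]
      exact Finset.sum_congr rfl fun i _ => by rw [sub_smul, one_smul]
    rw [h1]
    calc ‖∑ i, (1 - C i) • ∑ m, g i m‖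
        ≤ ∑ i, (1 - C i) * ((Dn i : ℝ) * G) := by
          apply norm_sum_le_of_le
          intro i _
          rw [norm_smul, Real.norm_eq_abs, abs_of_nonneg (by linarith [(hC01 i).2])]
          exact mul_le_mul_of_nonneg_left (hnormsum i) (by linarith [(hC01 i).2])
      _ = (D - S) * G := by
          rw [hD, hS]
          rw [← Finset.sum_sub_distrib, Finset.sum_mul]
          exact Finset.sum_congr rfl fun i _ => by ring
  have hUn : ‖U‖ ≤ S * G := by
    rw [hU, hS]
    calc ‖∑ i, C i • ∑ m, g i m‖
        ≤ ∑ i, C i * ((Dn i : ℝ) * G) := by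
          apply norm_sum_le_of_le
          intro i _
          rw [norm_smul, Real.norm_eq_abs, abs_of_nonneg (hC01 i).1]
          exact mul_le_mul_of_nonneg_left (hnormsum i) (hC01 i).1
      _ = (∑ i, (Dn i : ℝ) * C i) * G := by
          rw [Finset.sum_mul]
          exact Finset.sum_congr rfl fun i _ => by ring
  rw [key]
  calc ‖(1/D) • (T - U) + ((1/D) - (1/S)) • U‖
      ≤ ‖(1/D) • (T - U)‖ + ‖((1/D) - (1/S)) • U‖ := norm_add_le _ _
    _ ≤ (1/D) * ((D - S) * G) + ((1/S) - (1/D)) * (S * G) := by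
        apply add_le_add
        · rw [norm_smul, Real.norm_eq_abs, abs_of_pos (by positivity)]
          exact mul_le_mul_of_nonneg_left hTU (by positivity)
        · rw [norm_smul, Real.norm_eq_abs, abs_of_nonpos (by
            have : (1:ℝ)/D ≤ 1/S := one_div_le_one_div_of_le hSpos hSleD
            linarith), neg_sub]
          apply mul_le_mul_of_nonneg_left hUn
          have : (1:ℝ)/D ≤ 1/S := one_div_le_one_div_of_le hSpos hSleD
          linarith
    _ = (2 / D) * (D - S) * G := by field_simp; ring
end

section
/- Let E be a real inner product space, N ≥ 1, D_1,…,D_N positive integers with D = Σ_i D_i, and vectors g_{im} ∈ E (i = 1,…,N, m = 1,…,D_i) with ‖g_{im}‖² ≤ G² for all i, m. Let C_1,…,C_N be {0,1}-valued random variables with P(C_i = 0) = e_i, and suppose that almost surely S = Σ_{i=1}^N D_i C_i > 0. Define A = (1/D)·Σ_{i=1}^N Σ_{m=1}^{D_i} g_{im} − (1/S)·Σ_{i=1}^N C_i Σ_{m=1}^{D_i} g_{im}. Then E[‖A‖²] ≤ (4/D)·(Σ_{i=1}^N D_i e_i)·G². -/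
open Finset MeasureTheory

/-! With block sums `hᵢ = Σ_m g_{im}` of norm at most `dᵢ K` and received mass `S = Σ dᵢcᵢ`,
the error splits as `(1/D) Σ (1 - cᵢ) hᵢ + (1/D - 1/S) Σ cᵢ hᵢ`, and each part has norm at most
`(D - S) K / D`.
Since `0 ≤ (D - S)/D ≤ 1`, squaring costs only a factor `(D - S)/D`, which is linear in the
indicators, so its expectation is `Σ dᵢ eᵢ / D`. -/

section WeightedMean

variable {ι E : Type*} [Fintype ι] [SeminormedAddCommGroup E] [NormedSpace ℝ E]

lemma norm_sum_smul_le_of_le (w d : ι → ℝ) (h : ι → E) (K : ℝ) (hw : ∀ i, 0 ≤ w i)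
    (hh : ∀ i, ‖h i‖ ≤ d i * K) :
    ‖∑ i, w i • h i‖ ≤ (∑ i, d i * w i) * K := by
  rw [sum_mul]
  refine norm_sum_le_of_le _ fun i _ => ?_
  rw [norm_smul, Real.norm_of_nonneg (hw i), mul_right_comm, mul_comm (w i)]
  exact mul_le_mul_of_nonneg_right (hh i) (hw i)

lemma norm_weighted_mean_sub_le (d c : ι → ℝ) (h : ι → E) (K : ℝ) (hd : ∀ i, 0 ≤ d i)
    (hc : ∀ i, c i ∈ Set.Icc (0 : ℝ) 1) (hh : ∀ i, ‖h i‖ ≤ d i * K)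
    (hS : 0 < ∑ i, d i * c i) :
    ‖(1 / ∑ i, d i) • ∑ i, h i - (1 / ∑ i, d i * c i) • ∑ i, c i • h i‖ ≤
      2 * ((∑ i, d i * (1 - c i)) / ∑ i, d i) * K := by
  set D := ∑ i, d i
  set S := ∑ i, d i * c i
  have hDS : ∑ i, d i * (1 - c i) = D - S := by
    simp only [mul_one_sub, sum_sub_distrib, D, S]
  have hSD : S ≤ D := sum_le_sum fun i _ => mul_le_of_le_one_right (hd i) (hc i).2
  have hD : 0 < D := hS.trans_le hSD
  have hmissed : ‖∑ i, (1 - c i) • h i‖ ≤ (D - S) * K := by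
    rw [← hDS]
    exact norm_sum_smul_le_of_le _ d h K (fun i => sub_nonneg.2 (hc i).2) hh
  have hreceived : ‖∑ i, c i • h i‖ ≤ S * K :=
    norm_sum_smul_le_of_le c d h K (fun i => (hc i).1) hh
  have hsplit : (1 / D) • ∑ i, h i - (1 / S) • ∑ i, c i • h i =
      (1 / D) • ∑ i, (1 - c i) • h i - (1 / S - 1 / D) • ∑ i, c i • h i := by
    simp only [sub_smul, one_smul, sum_sub_distrib]
    module
  have hinv : 1 / D ≤ 1 / S := one_div_le_one_div_of_le hS hSD
  rw [hDS, hsplit]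
  calc _ ≤ (1 / D) * ‖∑ i, (1 - c i) • h i‖ + (1 / S - 1 / D) * ‖∑ i, c i • h i‖ := by
        refine (norm_sub_le _ _).trans_eq ?_
        rw [norm_smul, norm_smul, Real.norm_of_nonneg (by positivity),
          Real.norm_of_nonneg (sub_nonneg.2 hinv)]
    _ ≤ (1 / D) * ((D - S) * K) + (1 / S - 1 / D) * (S * K) := by gcongr
    _ = 2 * ((D - S) / D) * K := by field_simp; ring

lemma norm_weighted_mean_sub_sq_le (d c : ι → ℝ) (h : ι → E) (K : ℝ)
    (hd : ∀ i, 0 ≤ d i) (hc : ∀ i, c i ∈ Set.Icc (0 : ℝ) 1) (hh : ∀ i, ‖h i‖ ≤ d i * K)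
    (hS : 0 < ∑ i, d i * c i) :
    ‖(1 / ∑ i, d i) • ∑ i, h i - (1 / ∑ i, d i * c i) • ∑ i, c i • h i‖ ^ 2 ≤
      4 * K ^ 2 / (∑ i, d i) * ∑ i, d i * (1 - c i) := by
  set x := (∑ i, d i * (1 - c i)) / ∑ i, d i with hx
  have hx0 : 0 ≤ x := div_nonneg (sum_nonneg fun i _ => mul_nonneg (hd i)
    (sub_nonneg.2 (hc i).2)) (sum_nonneg fun i _ => hd i)
  have hx1 : x ≤ 1 := div_le_one_of_le₀
    (sum_le_sum fun i _ => mul_le_of_le_one_right (hd i) (sub_le_self _ (hc i).1))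
    (sum_nonneg fun i _ => hd i)
  calc _ ≤ (2 * x * K) ^ 2 := by
        gcongr
        exact norm_weighted_mean_sub_le d c h K hd hc hh hS
    _ = 4 * K ^ 2 * (x * x) := by ring
    _ ≤ 4 * K ^ 2 * x := by gcongr; exact mul_le_of_le_one_left hx0 hx1
    _ = _ := by rw [hx, mul_div_assoc']; ring

end WeightedMean

section Indicators

variable {ι Ω : Type*} {c : Ω → ℝ}

lemma one_sub_eq_indicator_of_eq_zero_or_eq_one (hc : ∀ ω, c ω = 0 ∨ c ω = 1) :
    (fun ω => 1 - c ω) = {ω | c ω = 0}.indicator 1 := by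
  funext ω
  rcases hc ω with h | h <;> simp [h]

variable [MeasurableSpace Ω] (μ : Measure Ω)

lemma integral_one_sub_of_eq_zero_or_eq_one (hmeas : Measurable c)
    (hc : ∀ ω, c ω = 0 ∨ c ω = 1) : ∫ ω, 1 - c ω ∂μ = μ.real {ω | c ω = 0} := by
  rw [one_sub_eq_indicator_of_eq_zero_or_eq_one hc]
  exact integral_indicator_one (hmeas (measurableSet_singleton 0))

variable [IsFiniteMeasure μ]

lemma integrable_one_sub_of_eq_zero_or_eq_one (hmeas : Measurable c)
    (hc : ∀ ω, c ω = 0 ∨ c ω = 1) : Integrable (fun ω => 1 - c ω) μ := by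
  rw [one_sub_eq_indicator_of_eq_zero_or_eq_one hc]
  exact (integrable_const 1).indicator (hmeas (measurableSet_singleton 0))

variable [Fintype ι] (d : ι → ℝ) {C : ι → Ω → ℝ} (hC : ∀ i, Measurable (C i))
  (hC01 : ∀ i ω, C i ω = 0 ∨ C i ω = 1)
include hC hC01

lemma integrable_sum_mul_one_sub : Integrable (fun ω => ∑ i, d i * (1 - C i ω)) μ :=
  integrable_finsetSum _ fun i _ =>
    (integrable_one_sub_of_eq_zero_or_eq_one μ (hC i) (hC01 i)).const_mul _

lemma integral_sum_mul_one_sub :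
    ∫ ω, ∑ i, d i * (1 - C i ω) ∂μ = ∑ i, d i * μ.real {ω | C i ω = 0} := by
  rw [integral_finsetSum _ fun i _ =>
    (integrable_one_sub_of_eq_zero_or_eq_one μ (hC i) (hC01 i)).const_mul _]
  refine sum_congr rfl fun i _ => ?_
  rw [integral_const_mul, integral_one_sub_of_eq_zero_or_eq_one μ (hC i) (hC01 i)]

end Indicators

theorem stmt_5_general {E : Type*} [NormedAddCommGroup E] [InnerProductSpace ℝ E]
    {Ω : Type*} [MeasurableSpace Ω] (μ : Measure Ω) [IsProbabilityMeasure μ]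
    (N : ℕ) (Dn : Fin N → ℕ)
    (g : (i : Fin N) → Fin (Dn i) → E) (G : ℝ)
    (hG : ∀ (i : Fin N) (m : Fin (Dn i)), ‖g i m‖ ^ 2 ≤ G ^ 2)
    (C : Fin N → Ω → ℝ) (hCmeas : ∀ i, Measurable (C i))
    (hC01 : ∀ i ω, C i ω = 0 ∨ C i ω = 1)
    (e : Fin N → ℝ) (he0 : ∀ i, 0 ≤ e i)
    (hPe : ∀ i, μ {ω | C i ω = 0} = ENNReal.ofReal (e i))
    (D : ℝ) (hD : D = ∑ i, (Dn i : ℝ))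
    (hSpos : ∀ᵐ ω ∂μ, 0 < ∑ i, (Dn i : ℝ) * C i ω) :
    ∫ ω, ‖(1 / D) • (∑ i, ∑ m, g i m) -
        (1 / (∑ i, (Dn i : ℝ) * C i ω)) • (∑ i, C i ω • ∑ m, g i m)‖ ^ 2 ∂μ ≤
      (4 / D) * (∑ i, (Dn i : ℝ) * e i) * G ^ 2 := by
  subst hD
  have hblock : ∀ i, ‖∑ m, g i m‖ ≤ Dn i * |G| := fun i => by
    simpa using norm_sum_le_of_le univ fun m _ => (abs_norm (g i m)).symm.trans_le
      (sq_le_sq.1 (hG i m))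
  have hpointwise : ∀ᵐ ω ∂μ, ‖(1 / ∑ i, (Dn i : ℝ)) • (∑ i, ∑ m, g i m) -
        (1 / (∑ i, (Dn i : ℝ) * C i ω)) • (∑ i, C i ω • ∑ m, g i m)‖ ^ 2 ≤
      4 * |G| ^ 2 / (∑ i, (Dn i : ℝ)) * ∑ i, (Dn i : ℝ) * (1 - C i ω) := by
    filter_upwards [hSpos] with ω hS
    refine norm_weighted_mean_sub_sq_le _ _ _ _ (fun i => Nat.cast_nonneg _)
      (fun i => ?_) hblock hS
    rcases hC01 i ω with h | h <;> simp [h]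
  calc _ ≤ ∫ ω, 4 * |G| ^ 2 / (∑ i, (Dn i : ℝ)) * ∑ i, (Dn i : ℝ) * (1 - C i ω) ∂μ :=
        integral_mono_of_nonneg (ae_of_all _ fun _ => sq_nonneg _)
          ((integrable_sum_mul_one_sub μ _ hCmeas hC01).const_mul _) hpointwise
    _ = _ := by
        rw [integral_const_mul, integral_sum_mul_one_sub μ _ hCmeas hC01, sq_abs]
        simp only [measureReal_def, hPe, ENNReal.toReal_ofReal (he0 _)]
        ring

/-- Expected aggregation-error bound: with deterministic gradients `g i m` of squared norm
at most `G²`, `{0,1}`-valued reception indicators `C i` with `P(C i = 0) = e i`, and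
`S = Σ_i D_i C_i > 0` almost surely, the mean squared aggregation error satisfies
`E[‖A‖²] ≤ (4/D)(Σ_i D_i e_i) G²`, where
`A = (1/D) Σ_i Σ_m g_{im} - (1/S) Σ_i C_i Σ_m g_{im}`. -/
theorem stmt_5 {E : Type*} [NormedAddCommGroup E] [InnerProductSpace ℝ E]
    {Ω : Type*} [MeasurableSpace Ω] (μ : Measure Ω) [IsProbabilityMeasure μ]
    (N : ℕ) (hN : 1 ≤ N) (Dn : Fin N → ℕ) (hDn : ∀ i, 0 < Dn i)
    (g : (i : Fin N) → Fin (Dn i) → E) (G : ℝ)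
    (hG : ∀ (i : Fin N) (m : Fin (Dn i)), ‖g i m‖ ^ 2 ≤ G ^ 2)
    (C : Fin N → Ω → ℝ) (hCmeas : ∀ i, Measurable (C i))
    (hC01 : ∀ i ω, C i ω = 0 ∨ C i ω = 1)
    (e : Fin N → ℝ) (he0 : ∀ i, 0 ≤ e i)
    (hPe : ∀ i, μ {ω | C i ω = 0} = ENNReal.ofReal (e i))
    (D : ℝ) (hD : D = ∑ i, (Dn i : ℝ))
    (hSpos : ∀ᵐ ω ∂μ, 0 < ∑ i, (Dn i : ℝ) * C i ω) :
    ∫ ω, ‖(1 / D) • (∑ i, ∑ m, g i m) -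
        (1 / (∑ i, (Dn i : ℝ) * C i ω)) • (∑ i, C i ω • ∑ m, g i m)‖ ^ 2 ∂μ ≤
      (4 / D) * (∑ i, (Dn i : ℝ) * e i) * G ^ 2 :=
  stmt_5_general μ N Dn g G hG C hCmeas hC01 e he0 hPe D hD hSpos
end
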